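/- Suppose for each pair (i,j) ∈ {1,…,β}² we have formal series f_{i,j}(u) = δ_{i,j} - Σ_{k≥0} b_{j,i,k} u^{-(k+1)}, and define Ǒ_{i,j}(u,v) = (uv/(u+v))·(δ_{i,j} - Σ_{r=1}^β f_{i,r}(u) f_{j,r}(v)). Then Ǒ_{i,j}(u,v) is a formal power series in u^{-1}, v^{-1} (no polar part at u+v=0 and no positive powers of u or v) if and only if the antisymmetry relation Σ_r f_{i,r}(u) f_{j,r}(-u) = δ_{i,j} holds as formal series in u^{-1}. -/

import Mathlib

/-!
With `s = u⁻¹`, `t = v⁻¹` the kernel is `(δ - Σ_r F_{i,r}(s) F_{j,r}(t)) / (s + t)`, so it is a power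
series iff the numerator `A(s, t)` is divisible by `s + t`, i.e. iff `A(s, -s) = 0`, which is the
unitarity relation. Coefficientwise, `A = (s + t) Q` determines `Q` along each antidiagonal
`k + l = n + 1` by the recursion `Q k l = A k (l + 1) - Q (k - 1) (l + 1)`, and the recursion is
consistent at its end `l = 0` exactly when the alternating sum of `A` along the antidiagonal vanishes.
-/

open Finset

variable {R : Type*} [Ring R]

/-- The coefficient of `s ^ k * t ^ l` in `(s + t) * Q(s, t)`. -/
def coeffMulXAddY (Q : ℕ → ℕ → R) (k l : ℕ) : R :=
  (if k = 0 then 0 else Q (k - 1) l) + (if l = 0 then 0 else Q k (l - 1))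

def altPartialSum (A : ℕ → ℕ → R) (n : ℕ) : ℕ → R
  | 0 => A 0 n
  | k + 1 => A (k + 1) (n - (k + 1)) - altPartialSum A n k

theorem altPartialSum_eq_sum (A : ℕ → ℕ → R) (n k : ℕ) :
    altPartialSum A n k = ∑ m ∈ range (k + 1), (-1 : R) ^ (k - m) * A m (n - m) := by
  induction k with
  | zero => simp [altPartialSum]
  | succ k ih =>
    rw [altPartialSum, ih, sum_range_succ _ (k + 1), Nat.sub_self, pow_zero, one_mul,
      sub_eq_add_neg, add_comm, ← sum_neg_distrib]
    congr 1
    refine sum_congr rfl fun m hm => ?_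
    rw [Nat.sub_add_comm (Nat.lt_succ_iff.mp (mem_range.mp hm)), pow_succ, mul_neg_one, neg_mul]

theorem altPartialSum_coeffMulXAddY {Q : ℕ → ℕ → R} {n k : ℕ} (hk : k < n) :
    altPartialSum (coeffMulXAddY Q) n k = Q k (n - k - 1) := by
  induction k with
  | zero => simp [altPartialSum, coeffMulXAddY, (Nat.pos_of_ne_zero hk.ne').ne']
  | succ k ih =>
    have hl : n - (k + 1) ≠ 0 := by omega
    rw [altPartialSum, ih (by omega), coeffMulXAddY, if_neg k.succ_ne_zero, if_neg hl,
      Nat.add_sub_cancel, show n - k - 1 = n - (k + 1) by omega, add_sub_cancel_left]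

theorem altPartialSum_coeffMulXAddY_self (Q : ℕ → ℕ → R) (n : ℕ) :
    altPartialSum (coeffMulXAddY Q) n n = 0 := by
  cases n with
  | zero => simp [altPartialSum, coeffMulXAddY]
  | succ n =>
    rw [altPartialSum, altPartialSum_coeffMulXAddY n.lt_succ_self]
    simp [coeffMulXAddY]

theorem coeffMulXAddY_altPartialSum {A : ℕ → ℕ → R} (hA : ∀ n, altPartialSum A n n = 0)
    (k l : ℕ) : coeffMulXAddY (fun k l => altPartialSum A (k + l + 1) k) k l = A k l := by
  obtain _ | k := k <;> obtain _ | l := l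
  · simpa [altPartialSum, coeffMulXAddY] using (hA 0).symm
  · simp [altPartialSum, coeffMulXAddY]
  · simpa [altPartialSum, coeffMulXAddY] using (sub_eq_zero.mp (hA (k + 1))).symm
  · simp only [coeffMulXAddY, altPartialSum, if_neg (Nat.succ_ne_zero _), Nat.add_sub_cancel]
    rw [show k + (l + 1) + 1 = k + 1 + l + 1 by omega, show k + 1 + l + 1 - (k + 1) = l + 1 by omega]
    abel

/-- A double power series `A(s, t)` is divisible by `s + t` iff `A(s, -s) = 0`. -/
theorem exists_eq_coeffMulXAddY_iff (A : ℕ → ℕ → R) :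
    (∃ Q : ℕ → ℕ → R, ∀ k l, A k l = coeffMulXAddY Q k l) ↔
      ∀ n, ∑ k ∈ range (n + 1), (-1 : R) ^ (n - k) * A k (n - k) = 0 := by
  simp only [← altPartialSum_eq_sum]
  constructor
  · rintro ⟨Q, hQ⟩ n
    rw [show A = coeffMulXAddY Q from funext₂ hQ]
    exact altPartialSum_coeffMulXAddY_self Q n
  · exact fun hA => ⟨_, fun k l => (coeffMulXAddY_altPartialSum hA k l).symm⟩

theorem sum_range_neg_one_pow_mul_ite_antidiagonal_zero (d : R) (n : ℕ) :
    ∑ k ∈ range (n + 1), (-1 : R) ^ (n - k) * (if k = 0 ∧ n - k = 0 then d else 0) =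
      if n = 0 then d else 0 := by
  cases n with
  | zero => simp
  | succ n => exact sum_eq_zero fun k hk => by simp [show ¬(k = 0 ∧ n + 1 - k = 0) by omega]

theorem kernel_regular_iff_unitarity_general (β : ℕ)
    (c : Fin β → Fin β → ℕ → ℂ)
    (i j : Fin β) :
    (∃ Q : ℕ → ℕ → ℂ, ∀ k l : ℕ,
        (if k = 0 ∧ l = 0 then (if i = j then (1 : ℂ) else 0) else 0)
            - ∑ r : Fin β, c i r k * c j r l
          = (if k = 0 then 0 else Q (k - 1) l) + (if l = 0 then 0 else Q k (l - 1)))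
      ↔ (∀ n : ℕ, (∑ k ∈ Finset.range (n + 1),
            (-1 : ℂ) ^ (n - k) * ∑ r : Fin β, c i r k * c j r (n - k))
          = if n = 0 then (if i = j then 1 else 0) else 0) := by
  refine (exists_eq_coeffMulXAddY_iff _).trans (forall_congr' fun n => ?_)
  simp only [mul_sub, sum_sub_distrib, sum_range_neg_one_pow_mul_ite_antidiagonal_zero]
  rw [sub_eq_zero, eq_comm]

/-- Lemma `lemmaBuv` structure: given formal series `f_{i,j}(u) = δ_{ij} - Σ_{k≥0} b u^{-k-1}`
with coefficient functions `c i j : ℕ → ℂ` (so `c i j 0 = δ_{ij}`), the kernel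
`Ǒ_{i,j}(u,v) = (uv/(u+v))(δ_{ij} - Σ_r f_{i,r}(u) f_{j,r}(v))` is a genuine double power
series in `u⁻¹, v⁻¹` (no polar part at `u+v=0`: in the variables `s = u⁻¹, t = v⁻¹` the
numerator `δ_{ij} - Σ_r F_{i,r}(s)F_{j,r}(t)` is divisible by `s+t`, expressed
coefficientwise via `Q`) if and only if `Σ_r f_{i,r}(u) f_{j,r}(-u) = δ_{ij}` as formal
series in `u⁻¹` (expressed coefficientwise on the right). -/
theorem kernel_regular_iff_unitarity (β : ℕ) (hβ : 1 ≤ β)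
    (c : Fin β → Fin β → ℕ → ℂ)
    (hconst : ∀ i j : Fin β, c i j 0 = if i = j then 1 else 0) (i j : Fin β) :
    (∃ Q : ℕ → ℕ → ℂ, ∀ k l : ℕ,
        (if k = 0 ∧ l = 0 then (if i = j then (1 : ℂ) else 0) else 0)
            - ∑ r : Fin β, c i r k * c j r l
          = (if k = 0 then 0 else Q (k - 1) l) + (if l = 0 then 0 else Q k (l - 1)))
      ↔ (∀ n : ℕ, (∑ k ∈ Finset.range (n + 1),
            (-1 : ℂ) ^ (n - k) * ∑ r : Fin β, c i r k * c j r (n - k))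
          = if n = 0 then (if i = j then 1 else 0) else 0) :=
  kernel_regular_iff_unitarity_general β c i j
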